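/- arXiv:1911.12545 — 5 statements merged into one kernel-verified Lean document; each statement's English description precedes it below -/
import Mathlib

section
/- Let $A$ be an $n\times n$ symmetric matrix with minimum eigenvalue $\lambda_1 < 0$, $b \in \mathbb{R}^n$, $\rho > 0$. If $x^*$ is a global minimizer of $f_1(x) = \frac{1}{2}x^T A x + b^T x + \frac{\rho}{3}\|x\|^3$, then the pair $(x^*, \|x^*\|^2)$ is a global minimizer of $f_2(x,y) = \frac{1}{2}x^T(A - \lambda_1 I)x + b^T x + \frac{\rho}{3}y^{3/2} + \frac{\lambda_1}{2}y$ over the set $\{(x,y) : \|x\|^2 \le y\}$, and the two optimal values coincide. -/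
open Matrix

/-- Cubic-regularized objective `f₁(x) = ½ xᵀAx + bᵀx + (ρ/3)‖x‖³`. -/
noncomputable def f1 {n : ℕ} (A : Matrix (Fin n) (Fin n) ℝ) (b : Fin n → ℝ) (ρ : ℝ)
    (x : Fin n → ℝ) : ℝ :=
  (1/2) * (x ⬝ᵥ A.mulVec x) + b ⬝ᵥ x + (ρ/3) * Real.sqrt (x ⬝ᵥ x) ^ 3

/-- Reformulated objective `f₂(x,y) = ½ xᵀ(A-λ₁I)x + bᵀx + (ρ/3) y^{3/2} + (λ₁/2) y`. -/
noncomputable def f2 {n : ℕ} (A : Matrix (Fin n) (Fin n) ℝ) (b : Fin n → ℝ) (ρ lam1 : ℝ)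
    (x : Fin n → ℝ) (y : ℝ) : ℝ :=
  (1/2) * (x ⬝ᵥ (A - lam1 • (1 : Matrix (Fin n) (Fin n) ℝ)).mulVec x) + b ⬝ᵥ x
    + (ρ/3) * y ^ ((3:ℝ)/2) + (lam1/2) * y

lemma sqrt_cube {z : ℝ} (hz : 0 ≤ z) : Real.sqrt z ^ 3 = z ^ ((3:ℝ)/2) := by
  rw [Real.sqrt_eq_rpow, ← Real.rpow_natCast (z ^ ((1:ℝ)/2)) 3, ← Real.rpow_mul hz]
  norm_num

lemma dot_self_nonneg {n : ℕ} (x : Fin n → ℝ) : (0:ℝ) ≤ x ⬝ᵥ x :=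
  Finset.sum_nonneg fun i _ => mul_self_nonneg _

lemma f2_eq {n : ℕ} (A : Matrix (Fin n) (Fin n) ℝ) (b : Fin n → ℝ) (ρ lam1 : ℝ)
    (x : Fin n → ℝ) : f2 A b ρ lam1 x (x ⬝ᵥ x) = f1 A b ρ x := by
  simp only [f1, f2, Matrix.sub_mulVec, Matrix.smul_mulVec, Matrix.one_mulVec,
    dotProduct_sub, dotProduct_smul, sqrt_cube (dot_self_nonneg x), smul_eq_mul]
  ring

theorem stmt_0 {n : ℕ} (A : Matrix (Fin n) (Fin n) ℝ) (hA : A.IsSymm)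
    (b : Fin n → ℝ) (ρ lam1 : ℝ) (hρ : 0 < ρ) (hlam1 : lam1 < 0)
    -- λ₁ is the minimum eigenvalue of A:
    (hlb : ∀ x : Fin n → ℝ, lam1 * (x ⬝ᵥ x) ≤ x ⬝ᵥ A.mulVec x)
    (heig : ∃ v : Fin n → ℝ, v ⬝ᵥ v = 1 ∧ A.mulVec v = lam1 • v)
    (xstar : Fin n → ℝ)
    (hopt : ∀ x : Fin n → ℝ, f1 A b ρ xstar ≤ f1 A b ρ x) :
    (∀ x : Fin n → ℝ, ∀ y : ℝ, x ⬝ᵥ x ≤ y →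
        f2 A b ρ lam1 xstar (xstar ⬝ᵥ xstar) ≤ f2 A b ρ lam1 x y) ∧
    f2 A b ρ lam1 xstar (xstar ⬝ᵥ xstar) = f1 A b ρ xstar := by
  obtain ⟨v, hv1, hAv⟩ := heig
  refine ⟨?_, f2_eq A b ρ lam1 xstar⟩
  intro x y hxy
  -- abbreviations
  set c : ℝ := x ⬝ᵥ v with hc
  have hynn : (0:ℝ) ≤ y := le_trans (dot_self_nonneg x) hxy
  have hdisc : (0:ℝ) ≤ c^2 + (y - x ⬝ᵥ x) := by nlinarith [sq_nonneg c]
  set d : ℝ := Real.sqrt (c^2 + (y - x ⬝ᵥ x)) with hd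
  have hd2 : d^2 = c^2 + (y - x ⬝ᵥ x) := Real.sq_sqrt hdisc
  have hdge : |c| ≤ d := by
    rw [hd, ← Real.sqrt_sq_eq_abs]
    exact Real.sqrt_le_sqrt (by nlinarith)
  set t : ℝ := if 0 ≤ b ⬝ᵥ v then -c - d else -c + d with ht
  have htbv : t * (b ⬝ᵥ v) ≤ 0 := by
    rcases le_or_gt 0 (b ⬝ᵥ v) with h | h
    · have : t ≤ 0 := by
        rw [ht, if_pos h]
        linarith [neg_abs_le c, abs_nonneg c]
      exact mul_nonpos_of_nonpos_of_nonneg this h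
    · have : 0 ≤ t := by
        rw [ht, if_neg (not_le.mpr h)]
        have := le_abs_self c
        linarith
      exact mul_nonpos_of_nonneg_of_nonpos this h.le
  have hroot : t^2 + 2*t*c = y - x ⬝ᵥ x := by
    rcases le_or_gt 0 (b ⬝ᵥ v) with h | h
    · rw [ht, if_pos h]; nlinarith
    · rw [ht, if_neg (not_le.mpr h)]; nlinarith
  set z : Fin n → ℝ := x + t • v with hz
  -- norm of z
  have hvx : v ⬝ᵥ x = c := by rw [hc, dotProduct_comm]
  have hzz : z ⬝ᵥ z = y := by
    simp only [hz, add_dotProduct, dotProduct_add, smul_dotProduct, dotProduct_smul,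
      smul_eq_mul, hvx, hv1]
    linear_combination hroot
  -- v ⬝ᵥ A x = lam1 * c
  have hvAx : v ⬝ᵥ A.mulVec x = lam1 * c := by
    rw [dotProduct_mulVec, ← Matrix.mulVec_transpose, hA.eq, hAv, smul_dotProduct,
      smul_eq_mul, hvx]
  have hxAv : x ⬝ᵥ A.mulVec v = lam1 * c := by
    rw [hAv, dotProduct_smul, smul_eq_mul, hc]
  have hvAv : v ⬝ᵥ A.mulVec v = lam1 := by
    rw [hAv, dotProduct_smul, smul_eq_mul, hv1, mul_one]
  -- z ⬝ A z
  have hzAz : z ⬝ᵥ A.mulVec z = x ⬝ᵥ A.mulVec x + 2*lam1*t*c + lam1*t^2 := by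
    simp only [hz, Matrix.mulVec_add, Matrix.mulVec_smul, add_dotProduct, dotProduct_add,
      smul_dotProduct, dotProduct_smul, smul_eq_mul, hvAx, hxAv, hvAv]
    ring
  -- f1 z = f2 x y + t * (b ⬝ᵥ v)
  have hbz : b ⬝ᵥ z = b ⬝ᵥ x + t * (b ⬝ᵥ v) := by
    simp only [hz, dotProduct_add, dotProduct_smul, smul_eq_mul]
  have hkey : f1 A b ρ z = f2 A b ρ lam1 x y + t * (b ⬝ᵥ v) := by
    simp only [f1, f2, hzz, hzAz, hbz, Matrix.sub_mulVec, Matrix.smul_mulVec,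
      Matrix.one_mulVec, dotProduct_sub, dotProduct_smul, smul_eq_mul, sqrt_cube hynn]
    linear_combination (lam1/2) * hroot
  calc f2 A b ρ lam1 xstar (xstar ⬝ᵥ xstar) = f1 A b ρ xstar := f2_eq A b ρ lam1 xstar
    _ ≤ f1 A b ρ z := hopt z
    _ = f2 A b ρ lam1 x y + t * (b ⬝ᵥ v) := hkey
    _ ≤ f2 A b ρ lam1 x y := by linarith
end

section
/- Let $A$ be an $n\times n$ symmetric matrix with minimum eigenvalue $\lambda_1 < 0$, $b \in \mathbb{R}^n$, $\rho > 0$, and let $(\tilde x, \tilde y)$ be an optimal solution to the convex reformulation $\min\{\frac{1}{2}x^T(A-\lambda_1 I)x + b^T x + \frac{\rho}{3}y^{3/2} + \frac{\lambda_1}{2}y : \|x\|^2 \le y\}$ with $\|\tilde x\|^2 < \tilde y$. Then $b^T v = 0$ for any unit eigenvector $v$ of $A$ associated with $\lambda_1$, and there exists a real $\zeta$ such that $\|\tilde x + \zeta v\|^2 = \tilde y$ and $\tilde x + \zeta v$ is a global minimizer of $f_1(x) = \frac{1}{2}x^T A x + b^T x + \frac{\rho}{3}\|x\|^3$. -/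
open Matrix

/-!
Along an eigenvector `v` of `λ₁` the quadratic form of `A - λ₁ I` is constant, so moving `x̃`
to `x̃ + t v` changes `f₂` by the linear term `t bᵀv` only. Since `‖x̃‖² < ỹ`, every small shift
is feasible, hence optimality forces `bᵀv = 0`. Then every shift is as good as `x̃`; choosing `ζ`
with `‖x̃ + ζ v‖² = ỹ` puts the point on the boundary `y = ‖x‖²`, where `f₂` restricts to `f₁`,
and optimality over the boundary is global minimality of `f₁`.
-/

open Filter Topology

section DotProduct

variable {ι R : Type*} [Fintype ι] [CommRing R]

lemma dotProduct_add_smul_self (x v : ι → R) (t : R) :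
    (x + t • v) ⬝ᵥ (x + t • v) = x ⬝ᵥ x + 2 * t * (x ⬝ᵥ v) + t ^ 2 * (v ⬝ᵥ v) := by
  simp only [add_dotProduct, dotProduct_add, smul_dotProduct, dotProduct_smul, smul_eq_mul,
    dotProduct_comm v x]
  ring

lemma dotProduct_mulVec_add_smul_of_mulVec_eq_zero {M : Matrix ι ι R} (hM : M.IsSymm)
    {v : ι → R} (hMv : M *ᵥ v = 0) (x : ι → R) (t : R) :
    (x + t • v) ⬝ᵥ M *ᵥ (x + t • v) = x ⬝ᵥ M *ᵥ x := by
  have hvMx : v ⬝ᵥ M *ᵥ x = 0 := by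
    rw [← hM.eq, dotProduct_transpose_mulVec, hMv, dotProduct_zero]
  rw [mulVec_add, mulVec_smul, hMv, smul_zero, add_zero, add_dotProduct, smul_dotProduct,
    hvMx, smul_zero, add_zero]

end DotProduct

lemma exists_dotProduct_add_smul_self_eq {ι : Type*} [Fintype ι] {x v : ι → ℝ}
    (hv : v ⬝ᵥ v = 1) {y : ℝ} (hy : x ⬝ᵥ x ≤ y) :
    ∃ ζ : ℝ, (x + ζ • v) ⬝ᵥ (x + ζ • v) = y := by
  set c := x ⬝ᵥ v
  have hdisc : 0 ≤ c ^ 2 + (y - x ⬝ᵥ x) := by nlinarith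
  refine ⟨-c + √(c ^ 2 + (y - x ⬝ᵥ x)), ?_⟩
  rw [dotProduct_add_smul_self, hv]
  linear_combination Real.sq_sqrt hdisc

section Reformulation

variable {n : ℕ} (A : Matrix (Fin n) (Fin n) ℝ) (b : Fin n → ℝ) (ρ lam1 : ℝ)

lemma f2_self_dotProduct (x : Fin n → ℝ) : f2 A b ρ lam1 x (x ⬝ᵥ x) = f1 A b ρ x := by
  have hx : 0 ≤ x ⬝ᵥ x := by simpa using dotProduct_star_self_nonneg x
  rw [f1, f2, Real.rpow_div_two_eq_sqrt 3 hx, sub_mulVec, dotProduct_sub, smul_mulVec,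
    one_mulVec, dotProduct_smul, smul_eq_mul]
  norm_cast
  ring

variable {A lam1}

lemma f2_add_smul_of_mulVec_eq (hA : A.IsSymm) {v : Fin n → ℝ} (hev : A *ᵥ v = lam1 • v)
    (x : Fin n → ℝ) (t y : ℝ) :
    f2 A b ρ lam1 (x + t • v) y = f2 A b ρ lam1 x y + t * (b ⬝ᵥ v) := by
  have hsymm : (A - lam1 • (1 : Matrix (Fin n) (Fin n) ℝ)).IsSymm := by
    rw [IsSymm, transpose_sub, hA.eq, transpose_smul, transpose_one]
  have hker : (A - lam1 • (1 : Matrix (Fin n) (Fin n) ℝ)) *ᵥ v = 0 := by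
    rw [sub_mulVec, hev, smul_mulVec, one_mulVec, sub_self]
  rw [f2, f2, dotProduct_mulVec_add_smul_of_mulVec_eq_zero hsymm hker, dotProduct_add,
    dotProduct_smul, smul_eq_mul]
  ring

end Reformulation

theorem stmt_3_general {n : ℕ} (A : Matrix (Fin n) (Fin n) ℝ) (hA : A.IsSymm)
    (b : Fin n → ℝ) (ρ lam1 : ℝ)
    (tx : Fin n → ℝ) (ty : ℝ) (hlt : tx ⬝ᵥ tx < ty)
    (hopt : ∀ x : Fin n → ℝ, ∀ y : ℝ, x ⬝ᵥ x ≤ y → f2 A b ρ lam1 tx ty ≤ f2 A b ρ lam1 x y)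
    (v : Fin n → ℝ) (hv : v ⬝ᵥ v = 1) (hev : A.mulVec v = lam1 • v) :
    b ⬝ᵥ v = 0 ∧
    ∃ ζ : ℝ, (tx + ζ • v) ⬝ᵥ (tx + ζ • v) = ty ∧
      ∀ x : Fin n → ℝ, f1 A b ρ (tx + ζ • v) ≤ f1 A b ρ x := by
  have hshift := f2_add_smul_of_mulVec_eq b ρ hA hev tx
  have hbv : b ⬝ᵥ v = 0 := by
    have hfeas : ∀ᶠ t in 𝓝 (0 : ℝ), (tx + t • v) ⬝ᵥ (tx + t • v) < ty := by
      simp_rw [dotProduct_add_smul_self]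
      exact ContinuousAt.eventually_lt (by fun_prop) continuousAt_const (by simpa using hlt)
    have hmin : IsLocalMin (fun t : ℝ => t * (b ⬝ᵥ v)) 0 := hfeas.mono fun t ht => by
      simpa [hshift] using hopt _ _ ht.le
    exact hmin.hasDerivAt_eq_zero (hasDerivAt_mul_const _)
  obtain ⟨ζ, hζ⟩ := exists_dotProduct_add_smul_self_eq hv hlt.le
  refine ⟨hbv, ζ, hζ, fun x => ?_⟩
  calc f1 A b ρ (tx + ζ • v) = f2 A b ρ lam1 tx ty := by
        rw [← f2_self_dotProduct _ _ _ lam1, hζ, hshift, hbv, mul_zero, add_zero]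
    _ ≤ f2 A b ρ lam1 x (x ⬝ᵥ x) := hopt x _ le_rfl
    _ = f1 A b ρ x := f2_self_dotProduct A b ρ lam1 x

/-- Hard-case recovery: if `(tx, ty)` is optimal for the reformulation with `‖tx‖² < ty`,
then `bᵀv = 0` for any unit eigenvector `v` of `λ₁`, and a suitable shift `tx + ζ v`
with `‖tx + ζ v‖² = ty` is a global minimizer of `f₁`. -/
theorem stmt_3 {n : ℕ} (A : Matrix (Fin n) (Fin n) ℝ) (hA : A.IsSymm)
    (b : Fin n → ℝ) (ρ lam1 : ℝ) (hρ : 0 < ρ) (hlam1 : lam1 < 0)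
    (hlb : ∀ x : Fin n → ℝ, lam1 * (x ⬝ᵥ x) ≤ x ⬝ᵥ A.mulVec x)
    (tx : Fin n → ℝ) (ty : ℝ) (hlt : tx ⬝ᵥ tx < ty)
    (hopt : ∀ x : Fin n → ℝ, ∀ y : ℝ, x ⬝ᵥ x ≤ y → f2 A b ρ lam1 tx ty ≤ f2 A b ρ lam1 x y)
    (v : Fin n → ℝ) (hv : v ⬝ᵥ v = 1) (hev : A.mulVec v = lam1 • v) :
    b ⬝ᵥ v = 0 ∧
    ∃ ζ : ℝ, (tx + ζ • v) ⬝ᵥ (tx + ζ • v) = ty ∧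
      ∀ x : Fin n → ℝ, f1 A b ρ (tx + ζ • v) ≤ f1 A b ρ x :=
  stmt_3_general A hA b ρ lam1 tx ty hlt hopt v hv hev
end

section
/- For any $x_0 \in \mathbb{R}^n$ and $y_0 \in \mathbb{R}$ with $\|x_0\|^2 > y_0$, the cubic $h(\mu) = \frac{1}{2}\mu^3 + (y_0+1)\mu^2 + (2y_0 + \frac{1}{2})\mu - \|x_0\|^2 + y_0$ has exactly one root in the interval $[\max\{0, -2y_0\}, \infty)$. -/
open Matrix

/-- The cubic `h(μ) = ½μ³ + (y₀+1)μ² + (2y₀+½)μ - ‖x₀‖² + y₀` has exactly one root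
in the interval `[max{0, -2y₀}, ∞)` whenever `‖x₀‖² > y₀`. -/
theorem stmt_4 {n : ℕ} (x0 : Fin n → ℝ) (y0 : ℝ) (h : x0 ⬝ᵥ x0 > y0) :
    ∃! μ : ℝ, μ ∈ Set.Ici (max 0 (-2 * y0)) ∧
      (1/2) * μ^3 + (y0 + 1) * μ^2 + (2 * y0 + 1/2) * μ - x0 ⬝ᵥ x0 + y0 = 0 := by
  set c : ℝ := x0 ⬝ᵥ x0 with hc
  have hc0 : 0 ≤ c := by
    rw [hc]
    exact Finset.sum_nonneg fun i _ => mul_self_nonneg _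
  set a : ℝ := max 0 (-2 * y0) with ha
  have ha0 : 0 ≤ a := le_max_left _ _
  have ha2 : 0 ≤ a + 2 * y0 := by
    have := le_max_right 0 (-2 * y0)
    simp only [ha]; linarith
  set f : ℝ → ℝ := fun μ => (1/2) * μ^3 + (y0 + 1) * μ^2 + (2 * y0 + 1/2) * μ - c + y0
    with hf
  -- strict monotonicity on the interval
  have mono : ∀ x y : ℝ, a ≤ x → x < y → f x < f y := by
    intro x y hx hxy
    have hx0 : 0 ≤ x := le_trans ha0 hx
    have hx2 : 0 ≤ x + 2 * y0 := by linarith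
    simp only [hf]
    nlinarith [sq_nonneg (x + 1), sq_nonneg (y + 1), sq_nonneg (y - x),
      mul_nonneg hx2 (sq_nonneg (y - x)), mul_nonneg hx0 (sq_nonneg (y - x)),
      mul_pos (sub_pos.mpr hxy) (pow_pos (by linarith : (0:ℝ) < y + 1) 2),
      mul_nonneg (mul_nonneg hx2 hx0) (le_of_lt (sub_pos.mpr hxy))]
  have hfa : f a ≤ 0 := by
    rcases le_total 0 (-2 * y0) with hy | hy
    · have : a = -2 * y0 := max_eq_right hy
      simp only [hf, this]; nlinarith
    · have : a = 0 := max_eq_left hy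
      simp only [hf, this]; nlinarith
  set M : ℝ := a + 2 * c + 1 with hM
  have haM : a ≤ M := by nlinarith
  have hfM : 0 ≤ f M := by
    have h1 : 0 ≤ M + 2 * y0 - (2 * c + 1) := by simp only [hM]; linarith
    have h2 : 1 ≤ M + 1 := by nlinarith
    simp only [hf]
    nlinarith [sq_nonneg (M + 1), mul_nonneg (by linarith : (0:ℝ) ≤ M + 2 * y0 - (2*c+1)) (sq_nonneg (M+1)), sq_nonneg M]
  have hcont : ContinuousOn f (Set.Icc a M) := Continuous.continuousOn (by
    simp only [hf]; fun_prop)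
  obtain ⟨μ, hμmem, hμ⟩ : ∃ μ ∈ Set.Icc a M, f μ = 0 := by
    have := intermediate_value_Icc haM hcont
    exact this ⟨hfa, hfM⟩
  refine ⟨μ, ⟨hμmem.1, hμ⟩, ?_⟩
  rintro ν ⟨hν, hνeq⟩
  have hfν : f ν = 0 := hνeq
  rcases lt_trichotomy ν μ with hlt | heq | hgt
  · have := mono ν μ hν hlt
    rw [hfν, hμ] at this; exact absurd this (lt_irrefl 0)
  · exact heq
  · have := mono μ ν hμmem.1 hgt
    rw [hfν, hμ] at this; exact absurd this (lt_irrefl 0)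
end

section
/- Let $S = \{(x,y) \in \mathbb{R}^n \times \mathbb{R} : \|x\|^2 \le y\}$ and let $(x_0, y_0)$ satisfy $\|x_0\|^2 > y_0$. If $\mu^* > 0$ is the unique root in $[\max\{0,-2y_0\}, \infty)$ of $\frac{1}{2}\mu^3 + (y_0+1)\mu^2 + (2y_0+\frac{1}{2})\mu - \|x_0\|^2 + y_0 = 0$, then the Euclidean projection of $(x_0, y_0)$ onto $S$ is $\left(\frac{x_0}{1+\mu^*},\, y_0 + \frac{\mu^*}{2}\right)$. -/
open Matrix

/-- Projection formula onto `S = {(x,y) : ‖x‖² ≤ y}`: if `‖x₀‖² > y₀` and `μ* > 0` is the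
root of the associated cubic in `[max{0,-2y₀}, ∞)`, then the Euclidean projection of
`(x₀,y₀)` onto `S` is `(x₀/(1+μ*), y₀ + μ*/2)`. -/
theorem stmt_6 {n : ℕ} (x0 : Fin n → ℝ) (y0 : ℝ) (hout : x0 ⬝ᵥ x0 > y0)
    (μs : ℝ) (hμpos : 0 < μs) (hμmem : μs ∈ Set.Ici (max 0 (-2 * y0)))
    (hroot : (1/2) * μs^3 + (y0 + 1) * μs^2 + (2 * y0 + 1/2) * μs - x0 ⬝ᵥ x0 + y0 = 0) :
    ((1 / (1 + μs)) • x0) ⬝ᵥ ((1 / (1 + μs)) • x0) ≤ y0 + μs / 2 ∧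
    ∀ x : Fin n → ℝ, ∀ y : ℝ, x ⬝ᵥ x ≤ y →
      ((1 / (1 + μs)) • x0 - x0) ⬝ᵥ ((1 / (1 + μs)) • x0 - x0) + (y0 + μs / 2 - y0)^2
        ≤ (x - x0) ⬝ᵥ (x - x0) + (y - y0)^2 := by
  have hs : (0:ℝ) < 1 + μs := by linarith
  have hs' : (1:ℝ) + μs ≠ 0 := ne_of_gt hs
  set a := x0 ⬝ᵥ x0 with ha
  have key : (y0 + μs/2) * (1+μs)^2 = a := by linear_combination hroot
  constructor
  · have h1 : ((1 / (1 + μs)) • x0) ⬝ᵥ ((1 / (1 + μs)) • x0) = (1/(1+μs))^2 * a := by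
      rw [smul_dotProduct, dotProduct_smul, smul_eq_mul, smul_eq_mul]; ring
    have h2 : (1/(1+μs))^2 * a = y0 + μs/2 := by
      rw [← key]; field_simp
    rw [h1, h2]
  · intro x y hxy
    set b := x0 ⬝ᵥ x with hb
    set c := x ⬝ᵥ x with hc
    have hL : ((1 / (1 + μs)) • x0 - x0) ⬝ᵥ ((1 / (1 + μs)) • x0 - x0)
        = (1/(1+μs) - 1)^2 * a := by
      rw [show (1 / (1 + μs)) • x0 - x0 = (1/(1+μs) - 1) • x0 by rw [sub_smul, one_smul]]
      rw [smul_dotProduct, dotProduct_smul, smul_eq_mul, smul_eq_mul]; ring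
    have hL2 : (1/(1+μs) - 1)^2 * a = μs^2 * (y0 + μs/2) := by
      rw [← key]; field_simp; ring
    have hR : (x - x0) ⬝ᵥ (x - x0) = c - 2*b + a := by
      rw [sub_dotProduct, dotProduct_sub, dotProduct_sub, dotProduct_comm x x0]
      ring
    have H1 : 0 ≤ (1+μs)^2 * c - 2*(1+μs)*b + a := by
      have h0 : 0 ≤ ((1+μs) • x - x0) ⬝ᵥ ((1+μs) • x - x0) := by
        apply Finset.sum_nonneg
        intro i _
        exact mul_self_nonneg _
      have he : ((1+μs) • x - x0) ⬝ᵥ ((1+μs) • x - x0) = (1+μs)^2 * c - 2*(1+μs)*b + a := by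
        simp only [sub_dotProduct, dotProduct_sub, smul_dotProduct, dotProduct_smul,
          smul_eq_mul, dotProduct_comm x x0]
        ring
      linarith [he ▸ h0]
    rw [hL, hL2, hR]
    nlinarith [mul_nonneg hs.le H1, mul_nonneg hμpos.le (sub_nonneg.2 hxy),
      sq_nonneg (y - y0 - μs/2), mul_nonneg (mul_nonneg hμpos.le (sq_nonneg (1+μs))) (sub_nonneg.2 hxy),
      mul_nonneg (sq_nonneg (1+μs)) (sq_nonneg (y - y0 - μs/2)), sq_nonneg (1+μs), hs, H1, key]
end

section
/- Let $A$ be a symmetric matrix with minimum eigenvalue $\lambda_1$, $b \in \mathbb{R}^n$, $\rho > 0$, $\epsilon > 0$, and $\eta \in [0,\epsilon]$. Let $v$ be a unit vector with $v^T A v = \lambda_1 + \epsilon - \eta$. Let $x_k \in \mathbb{R}^n$, $y_k \ge \|x_k\|^2$, and $t \in \mathbb{R}$ with $\|x_k + tv\|^2 = y_k$ and $t\,(v^T A x_k + b^T v + (-\lambda_1+\eta)\, x_k^T v) \le 0$. Define $f_1(x) = \frac{1}{2}x^T A x + b^T x + \frac{\rho}{3}\|x\|^3$ and $f_3(x,y)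 = \frac{1}{2}x^T(A + (-\lambda_1+\eta)I)x + b^T x + \frac{\rho}{3}y^{3/2} - \frac{-\lambda_1+\eta}{2}y$. Then $f_1(x_k + tv) - f_3(x_k, y_k) \le \epsilon t^2 / 2$. -/
open Matrix

/-- Surrogate objective `f₃(x,y) = ½ xᵀ(A + (-λ₁+η)I)x + bᵀx + (ρ/3) y^{3/2} - ((-λ₁+η)/2) y`. -/
noncomputable def f3 {n : ℕ} (A : Matrix (Fin n) (Fin n) ℝ) (b : Fin n → ℝ) (ρ lam1 η : ℝ)
    (x : Fin n → ℝ) (y : ℝ) : ℝ :=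
  (1/2) * (x ⬝ᵥ (A + (-lam1 + η) • (1 : Matrix (Fin n) (Fin n) ℝ)).mulVec x) + b ⬝ᵥ x
    + (ρ/3) * y ^ ((3:ℝ)/2) - ((-lam1 + η)/2) * y

/-- The correction step: `f₁(x_k + t v) - f₃(x_k, y_k) ≤ ε t² / 2`. -/
theorem stmt_14 {n : ℕ} (A : Matrix (Fin n) (Fin n) ℝ) (hA : A.IsSymm)
    (b : Fin n → ℝ) (ρ lam1 ε η : ℝ) (hρ : 0 < ρ) (hε : 0 < ε) (hη0 : 0 ≤ η) (hηε : η ≤ ε)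
    (hlb : ∀ x : Fin n → ℝ, lam1 * (x ⬝ᵥ x) ≤ x ⬝ᵥ A.mulVec x)
    (heig : ∃ w : Fin n → ℝ, w ⬝ᵥ w = 1 ∧ A.mulVec w = lam1 • w)
    (v : Fin n → ℝ) (hv : v ⬝ᵥ v = 1) (hvA : v ⬝ᵥ A.mulVec v = lam1 + ε - η)
    (xk : Fin n → ℝ) (yk : ℝ) (hyk : xk ⬝ᵥ xk ≤ yk)
    (t : ℝ) (ht : (xk + t • v) ⬝ᵥ (xk + t • v) = yk)
    (hsign : t * (v ⬝ᵥ A.mulVec xk + b ⬝ᵥ v + (-lam1 + η) * (xk ⬝ᵥ v)) ≤ 0) :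
    f1 A b ρ (xk + t • v) - f3 A b ρ lam1 η xk yk ≤ ε * t^2 / 2 := by
  have hyk0 : 0 ≤ yk := by
    rw [← ht]; exact Finset.sum_nonneg fun i _ => mul_self_nonneg _
  have hsqrt : Real.sqrt ((xk + t • v) ⬝ᵥ (xk + t • v)) ^ 3 = yk ^ ((3:ℝ)/2) := by
    rw [ht, Real.sqrt_eq_rpow, ← Real.rpow_natCast (yk ^ ((1:ℝ)/2)) 3,
      ← Real.rpow_mul hyk0]
    norm_num
  have hsym : xk ⬝ᵥ A.mulVec v = v ⬝ᵥ A.mulVec xk := by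
    rw [dotProduct_mulVec, ← mulVec_transpose, hA.eq, dotProduct_comm]
  have hxv : xk ⬝ᵥ (t • v) = t * (xk ⬝ᵥ v) := by simp [mul_comm]
  have hexp : yk = xk ⬝ᵥ xk + 2 * t * (xk ⬝ᵥ v) + t^2 := by
    rw [← ht]
    simp [dotProduct_add, add_dotProduct, smul_dotProduct, dotProduct_smul,
      dotProduct_comm v xk, hv]
    ring
  simp only [f1, f3, hsqrt]
  simp only [dotProduct_add, add_dotProduct, smul_dotProduct, dotProduct_smul,
    mulVec_add, mulVec_smul, add_mulVec, smul_mulVec, one_mulVec,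
    smul_eq_mul, hv, hvA, hsym]
  set a := v ⬝ᵥ A *ᵥ xk with ha
  set c := xk ⬝ᵥ v with hc
  set e := b ⬝ᵥ v with he
  have h2 : (-lam1 + η)/2 * yk
      = (-lam1 + η)/2 * (xk ⬝ᵥ xk) + (-lam1 + η) * (t * c) + (-lam1 + η)/2 * t^2 := by
    rw [hexp]; ring
  nlinarith [h2, hsign]
end
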